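/- arXiv:1312.5668 — 2 statements merged into one kernel-verified Lean document; each statement's English description precedes it below -/
import Mathlib

section
/- Let A be an element of GL(2,ℤ) with A² = I, where I is the 2×2 identity matrix. Then A = I, or A = −I, or there exists T ∈ GL(2,ℤ) such that TAT⁻¹ = D or TAT⁻¹ = S, where D is the diagonal matrix with diagonal entries 1, −1 and S is the matrix with rows (0,1) and (1,0). Moreover, the four matrices I, −I, D, S lie in pairwise distinct conjugacy classes of GL(2,ℤ). -/
/-!
An involution `A ≠ ±1` of `ℤ²` has trace `0` and determinant `-1`. The columns of `A + 1` are
fixed by `A` and not both zero, so `A` fixes a primitive vector; completing it to a basis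
conjugates `A` to `!![1, m; 0, -1]`, and conjugating by `!![1, k; 0, 1]` changes `m` by `2k`.
This leaves `!![1, 0; 0, -1] = D` or `!![1, 1; 0, -1]`, which is conjugate to `S`.
The trace separates `1`, `-1` and `{D, S}`, and reduction mod 2 separates `D` from `S`.
-/

/-- The diagonal matrix `diag(1, -1)` as an element of `GL(2, ℤ)`. -/
def Dmat : Matrix.GeneralLinearGroup (Fin 2) ℤ :=
  ⟨!![1, 0; 0, -1], !![1, 0; 0, -1], by decide, by decide⟩

/-- The matrix with rows `(0,1)` and `(1,0)` as an element of `GL(2, ℤ)`. -/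
def Smat : Matrix.GeneralLinearGroup (Fin 2) ℤ :=
  ⟨!![0, 1; 1, 0], !![0, 1; 1, 0], by decide, by decide⟩

theorem Units.isConj_of_isConj_val {M : Type*} [Monoid M] {a b : Mˣ} (h : IsConj (a : M) b) :
    IsConj a b := by
  obtain ⟨c, hc⟩ := h
  exact ⟨toUnits c, Units.ext hc⟩

section Conj

variable {n R : Type*} [Fintype n] [DecidableEq n] [CommRing R]

theorem Matrix.isConj_of_mul_eq_mul {M N P : Matrix n n R} (hP : IsUnit P.det)
    (h : P * M = N * P) : IsConj M N :=
  ⟨P.nonsingInvUnit hP, h⟩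

theorem IsConj.trace_eq {M N : Matrix n n R} (h : IsConj M N) : M.trace = N.trace := by
  obtain ⟨c, hc⟩ := h
  rw [← Matrix.trace_units_conj c M, show (c : Matrix n n R) * M = N * c from hc, mul_assoc,
    Units.mul_inv, mul_one]

end Conj

namespace Matrix

theorem fin_two_of_inj {α : Type*} {a b c d a' b' c' d' : α} :
    !![a, b; c, d] = !![a', b'; c', d'] ↔ a = a' ∧ b = b' ∧ c = c' ∧ d = d' := by
  simp only [EmbeddingLike.apply_eq_iff_eq, vecCons_inj, and_true, and_assoc]

variable {R : Type*} [CommRing R]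

theorem mul_self_eq_one_fin_two [NoZeroDivisors R] {M : Matrix (Fin 2) (Fin 2) R}
    (h : M * M = 1) :
    M = 1 ∨ M = -1 ∨ ∃ a b c : R, a * a + b * c = 1 ∧ M = !![a, b; c, -a] := by
  obtain ⟨a, b, c, d, rfl⟩ : ∃ a b c d : R, M = !![a, b; c, d] := ⟨_, _, _, _, M.eta_fin_two⟩
  rw [mul_fin_two, one_fin_two, fin_two_of_inj] at h
  obtain ⟨haa, hb, hc, hdd⟩ := h
  by_cases hd : d = -a
  · exact Or.inr (Or.inr ⟨a, b, c, haa, by rw [hd]⟩)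
  have had : a + d ≠ 0 := fun h' => hd (by linear_combination h')
  obtain rfl : b = 0 :=
    (mul_eq_zero.mp (by linear_combination hb : b * (a + d) = 0)).resolve_right had
  obtain rfl : c = 0 :=
    (mul_eq_zero.mp (by linear_combination hc : c * (a + d) = 0)).resolve_right had
  rcases mul_self_eq_one_iff.mp (by linear_combination haa : a * a = 1) with rfl | rfl <;>
    rcases mul_self_eq_one_iff.mp (by linear_combination hdd : d * d = 1) with rfl | rfl
  · exact Or.inl one_fin_two.symm
  · exact absurd (add_neg_cancel 1) had
  · exact absurd (neg_add_cancel 1) had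
  · exact Or.inr (Or.inl (by simp [one_fin_two]))

theorem exists_isConj_of_fixed_isCoprime {a b c p q : R} (hpq : IsCoprime p q)
    (h₁ : a * p + b * q = p) (h₂ : c * p + -a * q = q) :
    ∃ m : R, IsConj !![1, m; 0, -1] !![a, b; c, -a] := by
  obtain ⟨u, v, huv⟩ := hpq
  -- `m` is the top right entry of `P⁻¹ * M * P`, where `P⁻¹ = !![u, v; -q, p]`.
  refine ⟨u * (b * u - a * v) - v * (c * v + a * u),
    isConj_of_mul_eq_mul (P := !![p, -v; q, u]) ?_ ?_⟩
  · rw [det_fin_two_of, show p * u - -v * q = 1 by linear_combination huv]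
    exact isUnit_one
  · rw [mul_fin_two, mul_fin_two, fin_two_of_inj]
    refine ⟨?_, ?_, ?_, ?_⟩
    · linear_combination -h₁
    · linear_combination (b * u - a * v - v) * huv - u * v * h₁ - v * v * h₂
    · linear_combination -h₂
    · linear_combination (u - c * v - a * u) * huv + u * u * h₁ + u * v * h₂

theorem isConj_two_mul_add (k m : R) : IsConj !![1, 2 * k + m; 0, -1] !![1, m; 0, -1] :=
  isConj_of_mul_eq_mul (P := !![1, k; 0, 1]) (by simp [det_fin_two_of])
    (by rw [mul_fin_two, mul_fin_two, fin_two_of_inj]; ring_nf; simp)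

theorem isConj_one_one_zero_neg_one : IsConj !![(1 : R), 1; 0, -1] !![0, 1; 1, 0] :=
  isConj_of_mul_eq_mul (P := !![1, 0; 1, 1]) (by simp [det_fin_two_of])
    (by rw [mul_fin_two, mul_fin_two, fin_two_of_inj]; ring_nf; simp)

end Matrix

theorem Int.exists_isCoprime_fixed {a b c d v₁ v₂ : ℤ} (hv : v₁ ≠ 0 ∨ v₂ ≠ 0)
    (h₁ : a * v₁ + b * v₂ = v₁) (h₂ : c * v₁ + d * v₂ = v₂) :
    ∃ p q : ℤ, IsCoprime p q ∧ a * p + b * q = p ∧ c * p + d * q = q := by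
  obtain ⟨g, p, q, hg, hpq, rfl, rfl⟩ := Int.exists_gcd_one' (Int.gcd_pos_iff.mpr hv)
  have hg : (g : ℤ) ≠ 0 := by positivity
  exact ⟨p, q, Int.isCoprime_iff_gcd_eq_one.mpr hpq,
    mul_right_cancel₀ hg (by linear_combination h₁), mul_right_cancel₀ hg (by linear_combination h₂)⟩

theorem Matrix.isConj_diag_or_swap_of_trace_eq_zero {a b c : ℤ} (h : a * a + b * c = 1) :
    IsConj !![a, b; c, -a] !![1, 0; 0, -1] ∨ IsConj !![a, b; c, -a] !![0, 1; 1, 0] := by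
  obtain ⟨p, q, hpq, h₁, h₂⟩ :
      ∃ p q : ℤ, IsCoprime p q ∧ a * p + b * q = p ∧ c * p + -a * q = q := by
    by_cases ha : a + 1 = 0
    · exact Int.exists_isCoprime_fixed (v₁ := b) (v₂ := 1 - a) (Or.inr (by omega)) (by ring)
        (by linear_combination h)
    · exact Int.exists_isCoprime_fixed (v₁ := a + 1) (v₂ := c) (Or.inl ha)
        (by linear_combination h) (by ring)
  obtain ⟨m, hm⟩ := exists_isConj_of_fixed_isCoprime hpq h₁ h₂
  obtain ⟨k, rfl | rfl⟩ := Int.even_or_odd' m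
  · left
    exact hm.symm.trans (by simpa only [add_zero] using isConj_two_mul_add k 0)
  · right
    exact hm.symm.trans ((isConj_two_mul_add k 1).trans isConj_one_one_zero_neg_one)

theorem isConj_Dmat_or_Smat_of_sq_eq_one {A : Matrix.GeneralLinearGroup (Fin 2) ℤ}
    (hA : A ^ 2 = 1) : A = 1 ∨ A = -1 ∨ IsConj A Dmat ∨ IsConj A Smat := by
  have hA' : (A : Matrix (Fin 2) (Fin 2) ℤ) * A = 1 := by
    rw [← Units.val_mul, ← sq, hA, Units.val_one]
  rcases Matrix.mul_self_eq_one_fin_two hA' with h | h | ⟨a, b, c, habc, h⟩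
  · exact Or.inl (Units.ext h)
  · exact Or.inr (Or.inl (Units.ext h))
  · rcases Matrix.isConj_diag_or_swap_of_trace_eq_zero habc with h' | h' <;> rw [← h] at h'
    · exact Or.inr (Or.inr (Or.inl (Units.isConj_of_isConj_val h')))
    · exact Or.inr (Or.inr (Or.inr (Units.isConj_of_isConj_val h')))

theorem not_isConj_Dmat_Smat : ¬IsConj Dmat Smat := by
  let reduce : Matrix.GeneralLinearGroup (Fin 2) ℤ →* Matrix (Fin 2) (Fin 2) (ZMod 2) :=
    (Int.castRingHom (ZMod 2)).mapMatrix.toMonoidHom.comp (Units.coeHom _)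
  have hD : reduce Dmat = 1 := by decide
  have hS : reduce Smat ≠ 1 := by decide
  exact fun h => hS (isConj_one_right.mp (hD ▸ reduce.map_isConj h))

theorem order_two_in_GL2Z_classification (A : Matrix.GeneralLinearGroup (Fin 2) ℤ)
    (hA : A ^ 2 = 1) :
    (A = 1 ∨ A = -1 ∨
      ∃ T : Matrix.GeneralLinearGroup (Fin 2) ℤ, T * A * T⁻¹ = Dmat ∨ T * A * T⁻¹ = Smat) ∧
    (¬ IsConj (1 : Matrix.GeneralLinearGroup (Fin 2) ℤ) (-1) ∧
     ¬ IsConj (1 : Matrix.GeneralLinearGroup (Fin 2) ℤ) Dmat ∧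
     ¬ IsConj (1 : Matrix.GeneralLinearGroup (Fin 2) ℤ) Smat ∧
     ¬ IsConj (-1 : Matrix.GeneralLinearGroup (Fin 2) ℤ) Dmat ∧
     ¬ IsConj (-1 : Matrix.GeneralLinearGroup (Fin 2) ℤ) Smat ∧
     ¬ IsConj Dmat Smat) := by
  refine ⟨?_, ?_⟩
  · rcases isConj_Dmat_or_Smat_of_sq_eq_one hA with h | h | h | h
    · exact Or.inl h
    · exact Or.inr (Or.inl h)
    · obtain ⟨T, hT⟩ := isConj_iff.mp h
      exact Or.inr (Or.inr ⟨T, Or.inl hT⟩)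
    · obtain ⟨T, hT⟩ := isConj_iff.mp h
      exact Or.inr (Or.inr ⟨T, Or.inr hT⟩)
  · have htrace {X Y : Matrix.GeneralLinearGroup (Fin 2) ℤ} (h : IsConj X Y) :
        (X : Matrix (Fin 2) (Fin 2) ℤ).trace = (Y : Matrix (Fin 2) (Fin 2) ℤ).trace :=
      ((Units.coeHom _).map_isConj h).trace_eq
    refine ⟨fun h => ?_, fun h => ?_, fun h => ?_, fun h => ?_, fun h => ?_,
      not_isConj_Dmat_Smat⟩ <;> exact absurd (htrace h) (by decide)
end

section
/- Let Γ be the Heisenberg group, let Z(Γ) be its center, and let π : Γ → Γ/Z(Γ) be the canonical projection. Then for every automorphism γ of the quotient group Γ/Z(Γ) there exists an automorphism φ of Γ such that π(φ(g)) = γ(π(g)) for all g ∈ Γ; that is, the natural homomorphism Aut(Γ) → Aut(Γ/Z(Γ)) is surjective. -/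
/-- The commutator `g⁻¹h⁻¹gh` used in the paper's convention. -/
def commS {G : Type*} [Group G] (g h : G) : G := g⁻¹ * h⁻¹ * g * h

/-- Relations of the Heisenberg group: `[[x,y],x] = [[x,y],y] = 1`. -/
def heisRels : Set (FreeGroup (Fin 2)) :=
  { commS (commS (FreeGroup.of 0) (FreeGroup.of 1)) (FreeGroup.of 0),
    commS (commS (FreeGroup.of 0) (FreeGroup.of 1)) (FreeGroup.of 1) }

/-- The Heisenberg group, presented by `x, y` with `[[x,y],x] = [[x,y],y] = 1`. -/
abbrev Heisenberg : Type := PresentedGroup heisRels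

/-- The generator `x` of the Heisenberg group. -/
def Hx : Heisenberg := PresentedGroup.of 0

/-- The generator `y` of the Heisenberg group. -/
def Hy : Heisenberg := PresentedGroup.of 1

/-- The central element `λ = [x,y]`. -/
def Hlam : Heisenberg := commS Hx Hy

/-- A pair of elements of a group is free if the induced map from the free group
on two generators is injective. -/
def IsFreePair {G : Type*} [Group G] (u v : G) : Prop :=
  Function.Injective ⇑(FreeGroup.lift (fun b : Bool => if b then u else v) : FreeGroup Bool →* G)

/-!
The commutator `λ = [x, y]` is central, and a faithful model of `Γ` by integer unitriangular
`3 × 3` matrices shows that every commutator of `Γ` is a power of `λ` and that `Z(Γ) = ⟨λ⟩`.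
Since all commutators are central, the defining relations hold for any pair of elements of `Γ`,
so every endomorphism of `Γ/Z(Γ)` lifts to an endomorphism of `Γ`. Lift `γ` and `γ⁻¹` to `φ`
and `ψ`. Each composite `θ` of `φ` and `ψ` induces the identity on `Γ/Z(Γ)`, so `θ` moves every
element by a central factor; hence `θ` fixes every commutator, and therefore fixes
`Z(Γ) ≤ [Γ, Γ]` pointwise. This forces `θ` to be bijective, so `φ` is an automorphism.
-/

open scoped commutatorElement

section

variable {G : Type*} [Group G]

theorem map_commS {H : Type*} [Group H] (f : G →* H) (a b : G) :
    f (commS a b) = commS (f a) (f b) := by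
  simp [commS]

theorem commS_eq_commutatorElement (a b : G) : commS a b = ⁅a⁻¹, b⁻¹⁆ := by
  simp [commS, commutatorElement_def]

theorem commS_eq_one_iff_commute {a b : G} : commS a b = 1 ↔ Commute a b := by
  rw [commS_eq_commutatorElement, commutatorElement_eq_one_iff_commute, Commute.inv_inv_iff]

theorem SemiconjBy.swap_of_commute {a x d : G} (h : SemiconjBy a x (x * d))
    (hda : Commute d a) (hdx : Commute d x) : SemiconjBy x a (a * d⁻¹) := by
  unfold SemiconjBy at *
  calc x * a = d⁻¹ * (x * d * a) := by rw [← hdx.eq]; group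
    _ = a * d⁻¹ * x := by rw [← h, ← mul_assoc, hda.inv_left.eq]

theorem zpow_mul_zpow_of_commute_commS {a b : G} (ha : Commute (commS a b) a)
    (hb : Commute (commS a b) b) (m n : ℤ) :
    a ^ m * b ^ n = b ^ n * a ^ m * commS a b ^ (m * n) := by
  set c := commS a b with hc
  have hab : SemiconjBy a b (b * c) := by
    rw [SemiconjBy, mul_assoc, ha.eq, hc, commS]; group
  have hbn : SemiconjBy (b ^ n) a (a * (c ^ n)⁻¹) := by
    refine SemiconjBy.swap_of_commute ?_ (ha.zpow_left n) (hb.zpow_zpow n n)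
    simpa only [hb.symm.mul_zpow] using hab.zpow_right n
  have hbnm := hbn.zpow_right m
  rw [(ha.zpow_left n).inv_left.symm.mul_zpow, ← zpow_neg, ← zpow_mul] at hbnm
  calc a ^ m * b ^ n = a ^ m * c ^ (-n * m) * (c ^ (m * n) * b ^ n) := by group
    _ = a ^ m * c ^ (-n * m) * (b ^ n * c ^ (m * n)) := by rw [(hb.zpow_zpow _ _).eq]
    _ = b ^ n * a ^ m * c ^ (m * n) := by rw [← mul_assoc, ← hbnm.eq]

theorem commutatorElement_mul_mul_of_mem_center {a b z w : G} (hz : z ∈ Subgroup.center G)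
    (hw : w ∈ Subgroup.center G) : ⁅a * z, b * w⁆ = ⁅a, b⁆ := by
  rw [Subgroup.mem_center_iff] at hz hw
  calc ⁅a * z, b * w⁆ = a * (z * (b * w)) * z⁻¹ * a⁻¹ * (b * w)⁻¹ := by
        rw [commutatorElement_def]; group
    _ = a * b * (w * a⁻¹) * w⁻¹ * b⁻¹ := by rw [← hz]; group
    _ = ⁅a, b⁆ := by rw [← hw, commutatorElement_def]; group

theorem bijective_of_comp_mk'_eq_mk' (hZ : Subgroup.center G ≤ commutator G) {θ : G →* G}
    (hθ : (QuotientGroup.mk' (Subgroup.center G)).comp θ = QuotientGroup.mk' _) :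
    Function.Bijective θ := by
  have hcen (g : G) : g⁻¹ * θ g ∈ Subgroup.center G :=
    QuotientGroup.eq.mp (DFunLike.congr_fun hθ g).symm
  have hfix : ∀ z ∈ Subgroup.center G, θ z = z := by
    suffices commutator G ≤ θ.eqLocus (MonoidHom.id G) from fun z hz => this (hZ hz)
    rw [commutator_eq_closure, Subgroup.closure_le]
    rintro _ ⟨a, b, rfl⟩
    change θ ⁅a, b⁆ = ⁅a, b⁆
    rw [map_commutatorElement, ← mul_inv_cancel_left a (θ a), ← mul_inv_cancel_left b (θ b)]
    exact commutatorElement_mul_mul_of_mem_center (hcen a) (hcen b)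
  refine ⟨(injective_iff_map_eq_one θ).mpr fun g hg => ?_, fun g => ⟨g * (g⁻¹ * θ g)⁻¹, ?_⟩⟩
  · have hg' : g ∈ Subgroup.center G := by simpa [hg] using hcen g
    rw [← hfix g hg', hg]
  · rw [map_mul, map_inv, hfix _ (hcen g)]
    group

theorem exists_mulAut_lift_of_center_le_commutator (hZ : Subgroup.center G ≤ commutator G)
    (hlift : ∀ f : G ⧸ Subgroup.center G →* G ⧸ Subgroup.center G, ∃ θ : G →* G,
      (QuotientGroup.mk' _).comp θ = f.comp (QuotientGroup.mk' _))
    (γ : MulAut (G ⧸ Subgroup.center G)) :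
    ∃ φ : MulAut G, ∀ g : G,
      (QuotientGroup.mk (φ g) : G ⧸ Subgroup.center G) = γ (QuotientGroup.mk g) := by
  obtain ⟨φ, hφ⟩ := hlift γ.toMonoidHom
  obtain ⟨ψ, hψ⟩ := hlift γ.symm.toMonoidHom
  have hψφ : (QuotientGroup.mk' _).comp (ψ.comp φ) = QuotientGroup.mk' (Subgroup.center G) := by
    ext g
    have hψ' : (ψ (φ g) : G ⧸ _) = γ.symm (φ g) := DFunLike.congr_fun hψ (φ g)
    have hφ' : (φ g : G ⧸ _) = γ g := DFunLike.congr_fun hφ g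
    simp [hψ', hφ']
  have hφψ : (QuotientGroup.mk' _).comp (φ.comp ψ) = QuotientGroup.mk' (Subgroup.center G) := by
    ext g
    have hφ' : (φ (ψ g) : G ⧸ _) = γ (ψ g) := DFunLike.congr_fun hφ (ψ g)
    have hψ' : (ψ g : G ⧸ _) = γ.symm g := DFunLike.congr_fun hψ g
    simp [hψ', hφ']
  have hφ_bij : Function.Bijective φ :=
    ⟨(bijective_of_comp_mk'_eq_mk' hZ hψφ).1.of_comp (f := ψ),
      (bijective_of_comp_mk'_eq_mk' hZ hφψ).2.of_comp (g := ψ)⟩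
  exact ⟨MulEquiv.ofBijective φ hφ_bij, fun g => DFunLike.congr_fun hφ g⟩

end

namespace Heisenberg

theorem commute_lam_x : Commute Hlam Hx :=
  commS_eq_one_iff_commute.mp (PresentedGroup.one_of_mem (Set.mem_insert _ _))

theorem commute_lam_y : Commute Hlam Hy :=
  commS_eq_one_iff_commute.mp (PresentedGroup.one_of_mem (Set.mem_insert_of_mem _ rfl))

section Lift

variable {G : Type*} [Group G]

def lift (a b : G) (ha : Commute (commS a b) a) (hb : Commute (commS a b) b) :
    Heisenberg →* G :=
  PresentedGroup.toGroup (f := ![a, b]) <| by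
    rintro r (rfl | rfl) <;> simpa [map_commS, commS_eq_one_iff_commute]

variable {a b : G} {ha : Commute (commS a b) a} {hb : Commute (commS a b) b}

@[simp]
theorem lift_x : lift a b ha hb Hx = a :=
  PresentedGroup.toGroup.of _

@[simp]
theorem lift_y : lift a b ha hb Hy = b :=
  PresentedGroup.toGroup.of _

theorem hom_ext {f g : Heisenberg →* G} (hx : f Hx = g Hx) (hy : f Hy = g Hy) : f = g :=
  PresentedGroup.ext fun i => by fin_cases i; exacts [hx, hy]

end Lift

theorem lam_mem_center : Hlam ∈ Subgroup.center Heisenberg := by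
  have hconj : (MulAut.conj Hlam).toMonoidHom = MonoidHom.id Heisenberg :=
    hom_ext commute_lam_x.mul_inv_cancel commute_lam_y.mul_inv_cancel
  refine Subgroup.mem_center_iff.mpr fun g => ?_
  have := DFunLike.congr_fun hconj g
  simp only [MulEquiv.coe_toMonoidHom, MulAut.conj_apply, MonoidHom.id_apply] at this
  exact (mul_inv_eq_iff_eq_mul.mp this).symm

theorem commute_lam_zpow (n : ℤ) (g : Heisenberg) : Commute (Hlam ^ n) g :=
  Commute.zpow_left (Subgroup.mem_center_iff.mp lam_mem_center g).symm n

/-- The integer unitriangular matrix `!![1, a, c; 0, 1, b; 0, 0, 1]`. -/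
@[ext]
structure Model where
  a : ℤ
  b : ℤ
  c : ℤ

namespace Model

instance : Mul Model := ⟨fun u v => ⟨u.a + v.a, u.b + v.b, u.c + v.c + u.a * v.b⟩⟩
instance : One Model := ⟨⟨0, 0, 0⟩⟩
instance : Inv Model := ⟨fun u => ⟨-u.a, -u.b, -u.c + u.a * u.b⟩⟩

@[simp] theorem mul_a (u v : Model) : (u * v).a = u.a + v.a := rfl
@[simp] theorem mul_b (u v : Model) : (u * v).b = u.b + v.b := rfl
@[simp] theorem mul_c (u v : Model) : (u * v).c = u.c + v.c + u.a * v.b := rfl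
@[simp] theorem one_a : (1 : Model).a = 0 := rfl
@[simp] theorem one_b : (1 : Model).b = 0 := rfl
@[simp] theorem one_c : (1 : Model).c = 0 := rfl
@[simp] theorem inv_a (u : Model) : u⁻¹.a = -u.a := rfl
@[simp] theorem inv_b (u : Model) : u⁻¹.b = -u.b := rfl
@[simp] theorem inv_c (u : Model) : u⁻¹.c = -u.c + u.a * u.b := rfl

instance : Group Model where
  mul_assoc u v w := by ext <;> simp <;> ring
  one_mul u := by ext <;> simp
  mul_one u := by ext <;> simp
  inv_mul_cancel u := by ext <;> simp

def X : Model := ⟨1, 0, 0⟩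

def Y : Model := ⟨0, 1, 0⟩

theorem commute_commS_X_Y_X : Commute (commS X Y) X := by
  ext <;> simp [commS, X, Y]

theorem commute_commS_X_Y_Y : Commute (commS X Y) Y := by
  ext <;> simp [commS, X, Y]

end Model

def toModel : Heisenberg →* Model :=
  lift Model.X Model.Y Model.commute_commS_X_Y_X Model.commute_commS_X_Y_Y

@[simp]
theorem toModel_x : toModel Hx = Model.X := lift_x

@[simp]
theorem toModel_y : toModel Hy = Model.Y := lift_y

def ofModel : Model →* Heisenberg where
  toFun u := Hy ^ u.b * Hx ^ u.a * Hlam ^ u.c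
  map_one' := by simp
  map_mul' u v := by
    have hxy := zpow_mul_zpow_of_commute_commS commute_lam_x commute_lam_y u.a v.b
    change Hx ^ u.a * Hy ^ v.b = Hy ^ v.b * Hx ^ u.a * Hlam ^ (u.a * v.b) at hxy
    calc Hy ^ (u.b + v.b) * Hx ^ (u.a + v.a) * Hlam ^ (u.c + v.c + u.a * v.b)
        = Hy ^ u.b * Hy ^ v.b * Hx ^ u.a * (Hlam ^ (u.a * v.b) * Hx ^ v.a)
            * Hlam ^ (u.c + v.c) := by
          rw [(commute_lam_zpow (u.a * v.b) (Hx ^ v.a)).eq]; group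
      _ = Hy ^ u.b * (Hx ^ u.a * Hy ^ v.b) * Hx ^ v.a * Hlam ^ (u.c + v.c) := by
          rw [hxy]; group
      _ = Hy ^ u.b * Hx ^ u.a * (Hlam ^ u.c * (Hy ^ v.b * Hx ^ v.a)) * Hlam ^ v.c := by
          rw [(commute_lam_zpow u.c (Hy ^ v.b * Hx ^ v.a)).eq]; group
      _ = Hy ^ u.b * Hx ^ u.a * Hlam ^ u.c * (Hy ^ v.b * Hx ^ v.a * Hlam ^ v.c) := by
          group

theorem ofModel_comp_toModel : ofModel.comp toModel = MonoidHom.id Heisenberg :=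
  hom_ext (by simp [ofModel, Model.X]) (by simp [ofModel, Model.Y])

theorem eq_lam_zpow_of_toModel {g : Heisenberg} (ha : (toModel g).a = 0)
    (hb : (toModel g).b = 0) : g = Hlam ^ (toModel g).c :=
  calc g = ofModel (toModel g) := (DFunLike.congr_fun ofModel_comp_toModel g).symm
    _ = Hlam ^ (toModel g).c := by simp [ofModel, ha, hb]

theorem commS_mem_zpowers_lam (g h : Heisenberg) : commS g h ∈ Subgroup.zpowers Hlam :=
  ⟨_, (eq_lam_zpow_of_toModel (by simp [commS]) (by simp [commS])).symm⟩

theorem center_le_zpowers_lam : Subgroup.center Heisenberg ≤ Subgroup.zpowers Hlam := by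
  intro z hz
  have hx := congrArg (fun g => (toModel g).c) (Subgroup.mem_center_iff.mp hz Hx)
  have hy := congrArg (fun g => (toModel g).c) (Subgroup.mem_center_iff.mp hz Hy)
  simp only [map_mul, Model.mul_c, toModel_x, toModel_y, Model.X, Model.Y] at hx hy
  exact ⟨_, (eq_lam_zpow_of_toModel (by linarith) (by linarith)).symm⟩

theorem commS_mem_center (g h : Heisenberg) : commS g h ∈ Subgroup.center Heisenberg :=
  Subgroup.zpowers_le.mpr lam_mem_center (commS_mem_zpowers_lam g h)

theorem center_le_commutator : Subgroup.center Heisenberg ≤ commutator Heisenberg :=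
  center_le_zpowers_lam.trans <| Subgroup.zpowers_le.mpr <| by
    rw [Hlam, commS_eq_commutatorElement]
    exact Subgroup.commutator_mem_commutator trivial trivial

theorem exists_lift_of_quotient_center
    (f : Heisenberg ⧸ Subgroup.center Heisenberg →* Heisenberg ⧸ Subgroup.center Heisenberg) :
    ∃ θ : Heisenberg →* Heisenberg,
      (QuotientGroup.mk' _).comp θ = f.comp (QuotientGroup.mk' (Subgroup.center Heisenberg)) := by
  obtain ⟨a, ha⟩ := QuotientGroup.mk_surjective (f Hx)
  obtain ⟨b, hb⟩ := QuotientGroup.mk_surjective (f Hy)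
  have hcomm (k : Heisenberg) : Commute (commS a b) k :=
    (Subgroup.mem_center_iff.mp (commS_mem_center a b) k).symm
  exact ⟨lift a b (hcomm a) (hcomm b), hom_ext (by simpa using ha) (by simpa using hb)⟩

end Heisenberg

theorem heisenberg_aut_to_aut_of_quotient_by_center_surjective
    (γ : MulAut (Heisenberg ⧸ Subgroup.center Heisenberg)) :
    ∃ φ : MulAut Heisenberg, ∀ g : Heisenberg,
      (QuotientGroup.mk (φ g) : Heisenberg ⧸ Subgroup.center Heisenberg) =
        γ (QuotientGroup.mk g) :=
  exists_mulAut_lift_of_center_le_commutator Heisenberg.center_le_commutator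
    Heisenberg.exists_lift_of_quotient_center γ
end
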